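/- Demazure operators satisfy the braid relation: for |i − j| = 1 on ℂ[x_1,…,x_n], ∂_i ∂_j ∂_i = ∂_j ∂_i ∂_j, and for |i − j| > 1 they commute: ∂_i ∂_j = ∂_j ∂_i. -/

import Mathlib

/-!
Write `s = (i j)` and `t = (j m)`, and let `a = x_i - x_j`, `b = x_j - x_m`. These are the simple
roots of an `A₂` root system: `s a = -a`, `s b = t a = a + b`, `t b = -b`. Applying the defining
identity `a ∂_s f = f - s f` three times shows that the Vandermonde product `a b (a + b)` times
`∂_s ∂_t ∂_s f` is the alternating sum `f - s f - t f + s t f + t s f - s t s f`; exchanging the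
roles of `s` and `t` changes only the last term, and `s t s = t s t = (i m)`. Disjoint
transpositions are handled the same way with two steps.
-/

open MvPolynomial Equiv

section DividedDifference

variable {A : Type*} [CommRing A]

def IsDividedDifference (s : A → A) (a : A) (D : A → A) : Prop :=
  ∀ f, a * D f = f - s f

namespace IsDividedDifference

variable {F : Type*} [FunLike F A A] [RingHomClass F A A] {s t : F} {a b : A} {D E : A → A}

theorem mul_mul_mul_comp (hD : IsDividedDifference s a D) (hE : IsDividedDifference t b E)
    (f : A) : a * t a * b * E (D f) = t a * (f - s f) - a * (t f - t (s f)) := by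
  have hDt : t a * t (D f) = t f - t (s f) := by rw [← map_mul, hD f, map_sub]
  linear_combination a * t a * hE (D f) + t a * hD f - a * hDt

theorem mul_mul_comp_of_map_eq [IsDomain A] (hD : IsDividedDifference s a D)
    (hE : IsDividedDifference t b E) (hta : t a = a) (ha : a ≠ 0) (f : A) :
    a * b * E (D f) = f - s f - t f + t (s f) := by
  apply mul_left_cancel₀ ha
  linear_combination (hta ▸ hD.mul_mul_mul_comp hE f : a * a * b * E (D f) = _)

theorem comm [IsDomain A] (hD : IsDividedDifference s a D) (hE : IsDividedDifference t b E)
    (hta : t a = a) (hsb : s b = b) (hst : ∀ f, s (t f) = t (s f)) (ha : a ≠ 0) (hb : b ≠ 0)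
    (f : A) : D (E f) = E (D f) := by
  apply mul_left_cancel₀ (mul_ne_zero ha hb)
  linear_combination hE.mul_mul_comp_of_map_eq hD hsb hb f - hD.mul_mul_comp_of_map_eq hE hta ha f
    + hst f

theorem mul_comp_comp [IsDomain A] (hD : IsDividedDifference s a D)
    (hE : IsDividedDifference t b E) (hs : Function.Involutive s) (hsa : s a = -a)
    (hsb : s b = a + b) (hta : t a = a + b) (ha : a ≠ 0) (f : A) :
    a * b * (a + b) * D (E (D f)) = f - s f - t f + s (t f) + t (s f) - s (t (s f)) := by
  have h2 : a * (a + b) * b * E (D f) = (a + b) * (f - s f) - a * (t f - t (s f)) :=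
    hta ▸ hD.mul_mul_mul_comp hE f
  -- `a b (a + b)` is alternating under `s`, so `s` maps `h2` to the companion identity
  have h2s : -a * b * (a + b) * s (E (D f)) = b * (s f - f) + a * (s (t f) - s (t (s f))) := by
    have := congrArg s h2
    simp only [map_mul, map_sub, map_add, hsa, hsb, hs f] at this
    linear_combination this
  apply mul_left_cancel₀ ha
  linear_combination a * b * (a + b) * hD (E (D f)) + h2 + h2s

theorem braid [IsDomain A] (hD : IsDividedDifference s a D) (hE : IsDividedDifference t b E)
    (hs : Function.Involutive s) (ht : Function.Involutive t) (hsa : s a = -a)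
    (hsb : s b = a + b) (hta : t a = a + b) (htb : t b = -b)
    (hst : ∀ f, s (t (s f)) = t (s (t f))) (ha : a ≠ 0) (hb : b ≠ 0) (hab : a + b ≠ 0)
    (f : A) :
    D (E (D f)) = E (D (E f)) := by
  have hDED := hD.mul_comp_comp hE hs hsa hsb hta ha f
  have hEDE := hE.mul_comp_comp hD ht htb (add_comm a b ▸ hta) (add_comm a b ▸ hsb) hb f
  apply mul_left_cancel₀ (mul_ne_zero (mul_ne_zero ha hb) hab)
  linear_combination hDED - hEDE - hst f

end IsDividedDifference

end DividedDifference

section Demazure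

variable {R σ : Type*} [CommRing R]

theorem X_sub_X_ne_zero [IsDomain R] {i j : σ} (h : i ≠ j) :
    (X i - X j : MvPolynomial σ R) ≠ 0 :=
  sub_ne_zero_of_ne (X_injective.ne h)

variable [DecidableEq σ]

theorem rename_swap_involutive (i j : σ) : Function.Involutive (rename (R := R) (swap i j)) :=
  fun f => by rw [rename_rename, ← coe_trans, swap_swap, coe_refl, rename_id_apply]

theorem rename_swap_comm {i j i' j' : σ} (hii' : i ≠ i') (hij' : i ≠ j') (hji' : j ≠ i')
    (hjj' : j ≠ j') (f : MvPolynomial σ R) :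
    rename (swap i j) (rename (swap i' j') f) = rename (swap i' j') (rename (swap i j) f) := by
  simp only [rename_rename, ← Perm.coe_mul]
  rw [mul_swap_eq_swap_mul, swap_apply_of_ne_of_ne hii'.symm hji'.symm,
    swap_apply_of_ne_of_ne hij'.symm hjj'.symm]

theorem rename_swap_braid {i j m : σ} (hij : i ≠ j) (hjm : j ≠ m) (him : i ≠ m)
    (f : MvPolynomial σ R) :
    rename (swap i j) (rename (swap j m) (rename (swap i j) f)) =
      rename (swap j m) (rename (swap i j) (rename (swap j m) f)) := by
  have hsts : swap i j * swap j m * swap i j = swap i m := by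
    rw [swap_comm i j, swap_comm j m, swap_mul_swap_mul_swap hjm.symm him.symm]
  have htst : swap j m * swap i j * swap j m = swap i m := by
    rw [swap_mul_swap_mul_swap hij him, swap_comm]
  simp only [rename_rename, ← Perm.coe_mul, ← mul_assoc, hsts, htst]

variable [IsDomain R] {D E : MvPolynomial σ R → MvPolynomial σ R}

theorem demazure_comm {i j i' j' : σ} (hij : i ≠ j) (hi'j' : i' ≠ j') (hii' : i ≠ i')
    (hij' : i ≠ j') (hji' : j ≠ i') (hjj' : j ≠ j')
    (hD : IsDividedDifference (rename (swap i j)) (X i - X j) D)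
    (hE : IsDividedDifference (rename (swap i' j')) (X i' - X j') E) (f : MvPolynomial σ R) :
    D (E f) = E (D f) :=
  hD.comm hE
    (by simp only [map_sub, rename_X, swap_apply_of_ne_of_ne hii' hij',
      swap_apply_of_ne_of_ne hji' hjj'])
    (by simp only [map_sub, rename_X, swap_apply_of_ne_of_ne hii'.symm hji'.symm,
      swap_apply_of_ne_of_ne hij'.symm hjj'.symm])
    (rename_swap_comm hii' hij' hji' hjj') (X_sub_X_ne_zero hij) (X_sub_X_ne_zero hi'j') f

theorem demazure_braid {i j m : σ} (hij : i ≠ j) (hjm : j ≠ m) (him : i ≠ m)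
    (hD : IsDividedDifference (rename (swap i j)) (X i - X j) D)
    (hE : IsDividedDifference (rename (swap j m)) (X j - X m) E) (f : MvPolynomial σ R) :
    D (E (D f)) = E (D (E f)) := by
  have hik : X i - X j + (X j - X m) = (X i - X m : MvPolynomial σ R) := sub_add_sub_cancel _ _ _
  refine hD.braid hE (rename_swap_involutive i j) (rename_swap_involutive j m) ?_ ?_ ?_ ?_
    (rename_swap_braid hij hjm him) (X_sub_X_ne_zero hij) (X_sub_X_ne_zero hjm)
    (hik ▸ X_sub_X_ne_zero him) f
  · simp
  · simp [hik, swap_apply_of_ne_of_ne him.symm hjm.symm]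
  · simp [hik, swap_apply_of_ne_of_ne hij him]
  · simp

end Demazure

/-- Demazure operators `∂_k` on `ℂ[x_1,…,x_n]` (each characterized by
`(x_k - x_{k+1}) * ∂_k f = f - s_k f`) satisfy the braid relation
`∂_k ∂_l ∂_k = ∂_l ∂_k ∂_l` when `|k - l| = 1`, and commute, `∂_k ∂_l = ∂_l ∂_k`,
when `|k - l| > 1`. -/
theorem stmt_6 (n : ℕ) (k l : ℕ) (hk : k + 1 < n) (hl : l + 1 < n)
    (Dk Dl : MvPolynomial (Fin n) ℂ → MvPolynomial (Fin n) ℂ)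
    (hDk : ∀ f, (X (⟨k, Nat.lt_of_succ_lt hk⟩ : Fin n) - X ⟨k + 1, hk⟩) * Dk f =
      f - rename (Equiv.swap (⟨k, Nat.lt_of_succ_lt hk⟩ : Fin n) ⟨k + 1, hk⟩) f)
    (hDl : ∀ f, (X (⟨l, Nat.lt_of_succ_lt hl⟩ : Fin n) - X ⟨l + 1, hl⟩) * Dl f =
      f - rename (Equiv.swap (⟨l, Nat.lt_of_succ_lt hl⟩ : Fin n) ⟨l + 1, hl⟩) f) :
    ((l = k + 1 ∨ k = l + 1) →
      ∀ f, Dk (Dl (Dk f)) = Dl (Dk (Dl f))) ∧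
    ((k + 1 < l ∨ l + 1 < k) →
      ∀ f, Dk (Dl f) = Dl (Dk f)) := by
  refine ⟨?_, fun h f => ?_⟩
  · rintro (rfl | rfl) f
    · exact demazure_braid (by simp [Fin.ext_iff]) (by simp [Fin.ext_iff])
        (by simp [Fin.ext_iff]; omega) hDk hDl f
    · exact (demazure_braid (by simp [Fin.ext_iff]) (by simp [Fin.ext_iff])
        (by simp [Fin.ext_iff]; omega) hDl hDk f).symm
  · refine demazure_comm ?_ ?_ ?_ ?_ ?_ ?_ hDk hDl f <;> simp [Fin.ext_iff] <;> omega
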